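/- arXiv:2206.06504 — 2 statements merged into one kernel-verified Lean document; each statement's English description precedes it below -/
import Mathlib

section
/- For the switch with symmetric covariance σ²·I, the pair L(φ) = (1 − ⟨φ,1_{2n}⟩σ²/2)/∏_{j=1}^{2n}(1 − ⟨φ,d_j⟩σ²/2) and M_{i+n(j-1)}(φ) = (1 − ⟨φ,d_i⟩σ²/2)(1 − ⟨φ,d_{n+j}⟩σ²/2)/(n·∏_{k=1}^{2n}(1 − ⟨φ,d_k⟩σ²/2)) satisfies, for θ = Bφ with all denominators nonzero, (−(1/n)⟨θ,1_{n²}⟩ + (σ²/2)⟨θ,θ⟩)·L(φ) = −Σ_{i,j} θ_{i+n(j-1)}·M_{i+n(j-1)}(φ). -/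
/-!
Split `φ` along the two blocks of ports as `x i = φ i`, `y j = φ (n + j)`. The matrix `B` is the
incidence matrix of the complete bipartite graph `K_{n,n}` (queue `i + n j` joins input `i` to
output `j`), so `θ (i + n j) = x i + y j`, and the column `φᵀ D = (B φ)ᵀ B` has entries
`n x i + ∑ y` and `∑ x + n y j`. With `a i`, `c j` the two factors in the numerator of `M`, one has
`∑ a = ∑ c = n (1 - ⟨φ, 1⟩ σ² / 2)`, hence
`∑ i j, (x i + y j) a i c j = n (1 - ⟨φ, 1⟩ σ² / 2) (∑ x i a i + ∑ y j c j)`, and the last factor is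
`⟨φ, 1⟩ - σ² / 2 ⟨θ, θ⟩`. Both sides of the equation are therefore the same multiple of the common
factor `(∏ …)⁻¹`.
-/

open Matrix Finset

section CompleteBipartite

variable {ι κ R : Type*} [DecidableEq ι] [DecidableEq κ]

variable (ι κ R) in
def completeBipartiteIncidence [Zero R] [One R] : Matrix (ι × κ) (ι ⊕ κ) R :=
  of fun e v => if v = .inl e.1 ∨ v = .inr e.2 then 1 else 0

variable [Fintype ι] [Fintype κ] [NonAssocSemiring R] {m k : Type*}

theorem reindex_completeBipartiteIncidence_mulVec_apply [Fintype k] (e₁ : ι × κ ≃ m) (e₂ : ι ⊕ κ ≃ k)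
    (ψ : k → R) (i : ι) (j : κ) :
    (reindex e₁ e₂ (completeBipartiteIncidence ι κ R) *ᵥ ψ) (e₁ (i, j))
      = ψ (e₂ (.inl i)) + ψ (e₂ (.inr j)) := by
  rw [reindex_apply, submatrix_mulVec_equiv]
  simp [completeBipartiteIncidence, mulVec, dotProduct, ite_or, Fintype.sum_sum_type]

theorem vecMul_reindex_completeBipartiteIncidence_inl [Fintype m] (e₁ : ι × κ ≃ m) (e₂ : ι ⊕ κ ≃ k)
    (w : m → R) (i : ι) :
    (w ᵥ* reindex e₁ e₂ (completeBipartiteIncidence ι κ R)) (e₂ (.inl i))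
      = ∑ j, w (e₁ (i, j)) := by
  rw [reindex_apply, submatrix_vecMul_equiv]
  simp [completeBipartiteIncidence, vecMul, dotProduct, Fintype.sum_prod_type]
  rw [sum_comm]
  simp

theorem vecMul_reindex_completeBipartiteIncidence_inr [Fintype m] (e₁ : ι × κ ≃ m) (e₂ : ι ⊕ κ ≃ k)
    (w : m → R) (j : κ) :
    (w ᵥ* reindex e₁ e₂ (completeBipartiteIncidence ι κ R)) (e₂ (.inr j))
      = ∑ i, w (e₁ (i, j)) := by
  rw [reindex_apply, submatrix_vecMul_equiv]
  simp [completeBipartiteIncidence, vecMul, dotProduct, Fintype.sum_prod_type]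

end CompleteBipartite

theorem vecMul_map_transpose_mul_self {m k R S : Type*} [Fintype m] [Fintype k] [CommSemiring R]
    [CommSemiring S] (f : R →+* S) (B : Matrix m k R) (φ : k → S) :
    φ ᵥ* (Bᵀ * B).map f = (B.map f *ᵥ φ) ᵥ* B.map f := by
  rw [Matrix.map_mul, transpose_map, ← vecMul_vecMul, vecMul_transpose]

section Identity

variable {ι R : Type*} [Fintype ι] [CommRing R]

theorem sum_sum_add_sq (x y : ι → R) :
    ∑ i, ∑ j, (x i + y j) ^ 2
      = Fintype.card ι * (∑ i, x i ^ 2 + ∑ j, y j ^ 2) + 2 * (∑ i, x i) * ∑ j, y j := by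
  simp only [add_sq, sum_add_distrib, sum_const, card_univ, nsmul_eq_mul, ← mul_sum, ← sum_mul]
  ring

theorem sum_sum_add_mul_one_sub_mul_one_sub (x y : ι → R) (s : R) :
    ∑ i, ∑ j, (x i + y j) * ((1 - ((Fintype.card ι : R) * x i + ∑ j, y j) * s)
        * (1 - (∑ i, x i + (Fintype.card ι : R) * y j) * s))
      = Fintype.card ι * (1 - (∑ i, x i + ∑ j, y j) * s)
          * (∑ i, x i + ∑ j, y j - s * ∑ i, ∑ j, (x i + y j) ^ 2) := by
  set n : R := (Fintype.card ι : R)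
  set a : ι → R := fun i => 1 - (n * x i + ∑ j, y j) * s
  set c : ι → R := fun j => 1 - (∑ i, x i + n * y j) * s
  have hsplit : ∑ i, ∑ j, (x i + y j) * (a i * c j)
      = (∑ i, x i * a i) * ∑ j, c j + (∑ i, a i) * ∑ j, y j * c j := by
    simp only [sum_mul_sum, ← sum_add_distrib]
    exact sum_congr rfl fun i _ => sum_congr rfl fun j _ => by ring
  have hsum_a : ∑ i, a i = n * (1 - (∑ i, x i + ∑ j, y j) * s) := by
    rw [sum_congr rfl fun i _ => show a i = 1 - (s * n) * x i - s * ∑ j, y j by ring]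
    simp only [sum_sub_distrib, ← mul_sum, sum_const, card_univ, nsmul_eq_mul, mul_one]
    ring
  have hsum_c : ∑ j, c j = n * (1 - (∑ i, x i + ∑ j, y j) * s) := by
    rw [sum_congr rfl fun j _ => show c j = 1 - (s * n) * y j - s * ∑ i, x i by ring]
    simp only [sum_sub_distrib, ← mul_sum, sum_const, card_univ, nsmul_eq_mul, mul_one]
    ring
  have hsum_xa : ∑ i, x i * a i
      = ∑ i, x i - s * (n * ∑ i, x i ^ 2 + (∑ i, x i) * ∑ j, y j) := by
    rw [sum_congr rfl fun i _ =>
      show x i * a i = x i - (s * n) * x i ^ 2 - (s * ∑ j, y j) * x i by ring]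
    simp only [sum_sub_distrib, ← mul_sum]
    ring
  have hsum_yc : ∑ j, y j * c j
      = ∑ j, y j - s * (n * ∑ j, y j ^ 2 + (∑ i, x i) * ∑ j, y j) := by
    rw [sum_congr rfl fun j _ =>
      show y j * c j = y j - (s * n) * y j ^ 2 - (s * ∑ i, x i) * y j by ring]
    simp only [sum_sub_distrib, ← mul_sum]
    ring
  rw [hsplit, hsum_a, hsum_c, hsum_xa, hsum_yc, sum_sum_add_sq]
  ring

end Identity

def pairIndex (n : ℕ) : Fin n × Fin n ≃ Fin (n ^ 2) :=
  (Equiv.prodComm _ _).trans (finProdFinEquiv.trans (finCongr (sq n).symm))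

def portIndex (n : ℕ) : Fin n ⊕ Fin n ≃ Fin (2 * n) :=
  finSumFinEquiv.trans (finCongr (two_mul n).symm)

@[simp]
theorem pairIndex_apply_val (n : ℕ) (i j : Fin n) : (pairIndex n (i, j) : ℕ) = i + n * j := rfl

@[simp]
theorem portIndex_inl_val (n : ℕ) (i : Fin n) : (portIndex n (.inl i) : ℕ) = i := rfl

@[simp]
theorem portIndex_inr_val (n : ℕ) (j : Fin n) : (portIndex n (.inr j) : ℕ) = n + j := rfl

section Switch

variable {n : ℕ}

def IsSwitchIncidence (B : Matrix (Fin (n ^ 2)) (Fin (2 * n)) ℝ) : Prop :=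
  ∀ r c, B r c = if (c : ℕ) = (r : ℕ) % n ∨ (c : ℕ) = n + (r : ℕ) / n then 1 else 0

variable {B : Matrix (Fin (n ^ 2)) (Fin (2 * n)) ℝ}

theorem IsSwitchIncidence.apply_pairIndex_portIndex (hB : IsSwitchIncidence B) (i j : Fin n) (v : Fin n ⊕ Fin n) :
    B (pairIndex n (i, j)) (portIndex n v) = if v = .inl i ∨ v = .inr j then 1 else 0 := by
  have hmod : (i + n * j : ℕ) % n = i := by
    rw [Nat.add_mul_mod_self_left, Nat.mod_eq_of_lt i.isLt]
  have hdiv : (i + n * j : ℕ) / n = j := by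
    rw [Nat.add_mul_div_left _ _ i.pos, Nat.div_eq_of_lt i.isLt, zero_add]
  rw [hB, pairIndex_apply_val, hmod, hdiv]
  refine if_congr ?_ rfl rfl
  rcases v with i' | j' <;> simp [Fin.ext_iff] <;> omega

theorem IsSwitchIncidence.map_ofReal_eq_reindex (hB : IsSwitchIncidence B) :
    B.map Complex.ofRealHom
      = reindex (pairIndex n) (portIndex n) (completeBipartiteIncidence (Fin n) (Fin n) ℂ) := by
  ext r c
  obtain ⟨⟨i, j⟩, rfl⟩ := (pairIndex n).surjective r
  obtain ⟨v, rfl⟩ := (portIndex n).surjective c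
  simp only [map_apply, reindex_apply, submatrix_apply, Equiv.symm_apply_apply,
    hB.apply_pairIndex_portIndex, completeBipartiteIncidence, of_apply]
  split_ifs <;> simp

theorem IsSwitchIncidence.mulVec_pairIndex (hB : IsSwitchIncidence B) (φ : Fin (2 * n) → ℂ)
    (i j : Fin n) :
    (B.map Complex.ofRealHom *ᵥ φ) (pairIndex n (i, j))
      = φ (portIndex n (.inl i)) + φ (portIndex n (.inr j)) := by
  rw [hB.map_ofReal_eq_reindex, reindex_completeBipartiteIncidence_mulVec_apply]

theorem IsSwitchIncidence.vecMul_gram_inl (hB : IsSwitchIncidence B) (φ : Fin (2 * n) → ℂ)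
    (i : Fin n) :
    (φ ᵥ* (Bᵀ * B).map Complex.ofRealHom) (portIndex n (.inl i))
      = n * φ (portIndex n (.inl i)) + ∑ j, φ (portIndex n (.inr j)) := by
  rw [vecMul_map_transpose_mul_self Complex.ofRealHom, hB.map_ofReal_eq_reindex,
    vecMul_reindex_completeBipartiteIncidence_inl]
  simp only [reindex_completeBipartiteIncidence_mulVec_apply, sum_add_distrib, sum_const,
    card_univ, Fintype.card_fin, nsmul_eq_mul]

theorem IsSwitchIncidence.vecMul_gram_inr (hB : IsSwitchIncidence B) (φ : Fin (2 * n) → ℂ)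
    (j : Fin n) :
    (φ ᵥ* (Bᵀ * B).map Complex.ofRealHom) (portIndex n (.inr j))
      = ∑ i, φ (portIndex n (.inl i)) + n * φ (portIndex n (.inr j)) := by
  rw [vecMul_map_transpose_mul_self Complex.ofRealHom, hB.map_ofReal_eq_reindex,
    vecMul_reindex_completeBipartiteIncidence_inr]
  simp only [reindex_completeBipartiteIncidence_mulVec_apply, sum_add_distrib, sum_const,
    card_univ, Fintype.card_fin, nsmul_eq_mul]

end Switch

theorem stmt_14 (n : ℕ) (hn : 1 ≤ n) (σ : ℝ)
    (B : Matrix (Fin (n^2)) (Fin (2*n)) ℝ)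
    (hB : ∀ (r : Fin (n^2)) (c : Fin (2*n)),
      B r c = if (c : ℕ) = (r : ℕ) % n ∨ (c : ℕ) = n + (r : ℕ) / n then 1 else 0)
    (D : Matrix (Fin (2*n)) (Fin (2*n)) ℝ) (hD : D = Bᵀ * B)
    (φ : Fin (2*n) → ℂ) (θ : Fin (n^2) → ℂ)
    (hθ : θ = fun r => ∑ c : Fin (2*n), (B r c : ℂ) * φ c)
    (L : ℂ)
    (hL : L = (1 - (∑ k : Fin (2*n), φ k) * (σ^2 : ℂ) / 2)
          / ∏ c : Fin (2*n), (1 - (∑ k : Fin (2*n), φ k * (D k c : ℂ)) * (σ^2 : ℂ) / 2))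
    (M : Fin (n^2) → ℂ)
    (hM : ∀ i j : Fin n,
      M ⟨(i : ℕ) + n * (j : ℕ), by have := i.isLt; have := j.isLt; nlinarith⟩
        = (1 - (∑ k : Fin (2*n), φ k * (D k ⟨(i : ℕ), by have := i.isLt; omega⟩ : ℂ))
              * (σ^2 : ℂ) / 2)
          * (1 - (∑ k : Fin (2*n), φ k * (D k ⟨n + (j : ℕ), by have := j.isLt; omega⟩ : ℂ))
              * (σ^2 : ℂ) / 2)
          / ((n : ℂ) * ∏ c : Fin (2*n),
              (1 - (∑ k : Fin (2*n), φ k * (D k c : ℂ)) * (σ^2 : ℂ) / 2))) :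
    (-((n : ℂ))⁻¹ * (∑ r : Fin (n^2), θ r)
        + (σ^2 : ℂ) / 2 * ∑ r : Fin (n^2), θ r * θ r) * L
      = - ∑ i : Fin n, ∑ j : Fin n,
          θ ⟨(i : ℕ) + n * (j : ℕ), by have := i.isLt; have := j.isLt; nlinarith⟩
          * M ⟨(i : ℕ) + n * (j : ℕ), by have := i.isLt; have := j.isLt; nlinarith⟩ := by
  replace hB : IsSwitchIncidence B := hB
  set P := ∏ c : Fin (2*n), (1 - (∑ k : Fin (2*n), φ k * (D k c : ℂ)) * (σ^2 : ℂ) / 2)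
  set x : Fin n → ℂ := fun i => φ (portIndex n (.inl i))
  set y : Fin n → ℂ := fun j => φ (portIndex n (.inr j))
  have hθ_pair (i j : Fin n) : θ (pairIndex n (i, j)) = x i + y j := by
    rw [hθ]
    exact hB.mulVec_pairIndex φ i j
  have hM_pair (i j : Fin n) : M (pairIndex n (i, j))
      = (1 - (n * x i + ∑ j, y j) * σ ^ 2 / 2) * (1 - (∑ i, x i + n * y j) * σ ^ 2 / 2)
        / (n * P) := by
    rw [← hB.vecMul_gram_inl, ← hB.vecMul_gram_inr, ← hD]
    exact hM i j
  have hsum_φ : ∑ k, φ k = ∑ i, x i + ∑ j, y j := by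
    rw [← (portIndex n).sum_comp, Fintype.sum_sum_type]
  have hsum_θ : ∑ r, θ r = n * (∑ i, x i + ∑ j, y j) := by
    simp [← (pairIndex n).sum_comp, Fintype.sum_prod_type, hθ_pair, sum_add_distrib, mul_add,
      mul_sum]
  have hsum_θsq : ∑ r, θ r * θ r = ∑ i, ∑ j, (x i + y j) ^ 2 := by
    simp [← (pairIndex n).sum_comp, Fintype.sum_prod_type, hθ_pair, sq]
  have hn0 : (n : ℂ) ≠ 0 := by exact_mod_cast Nat.one_le_iff_ne_zero.mp hn
  have key := sum_sum_add_mul_one_sub_mul_one_sub x y ((σ ^ 2 : ℂ) / 2)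
  simp only [Fintype.card_fin, ← mul_div_assoc] at key
  calc _ = -(∑ i, ∑ j, (x i + y j) * ((1 - (n * x i + ∑ j, y j) * σ ^ 2 / 2)
        * (1 - (∑ i, x i + n * y j) * σ ^ 2 / 2))) / (n * P) := by
        rw [key, hL, hsum_φ, hsum_θ, hsum_θsq]
        field_simp
        ring
    _ = - ∑ i, ∑ j, θ (pairIndex n (i, j)) * M (pairIndex n (i, j)) := by
        simp only [neg_div, sum_div, hθ_pair, hM_pair, mul_div_assoc]
end

section
/- Let γ > 0 and define L(φ) = 1/((1−φ₁)(1−(φ₁+φ₂)/(2γ))), M₁(φ) = 1/(1−(φ₁+φ₂)/(2γ)), M₂(φ) = 1/(1−φ₁). Then for all φ₁, φ₂ ∈ ℂ at which the denominators are nonzero, L(φ)·((1−2γ)φ₂ + φ₂² − φ₁ + φ₁²) + (φ₁−φ₂)·M₁(φ) + 2γφ₂·M₂(φ) = 0. -/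
theorem one_div_mul_add_mul_one_div_add_mul_one_div_eq_zero {K : Type*} [Field K]
    {a b q c d : K} (ha : a ≠ 0) (hb : b ≠ 0) (h : q + c * a + d * b = 0) :
    1 / (a * b) * q + c * (1 / b) + d * (1 / a) = 0 := by
  field_simp
  linear_combination h

theorem n_system_numerator_eq {K : Type*} [Field K] {c : K} (hc : c ≠ 0) (x y : K) :
    (1 - c) * y + y ^ 2 - x + x ^ 2 + (x - y) * (1 - x) + c * y * (1 - (x + y) / c) = 0 := by
  field_simp
  ring

theorem stmt_15 (γ : ℝ) (hγ : 0 < γ) (φ₁ φ₂ : ℂ)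
    (h₁ : 1 - φ₁ ≠ 0) (h₂ : 1 - (φ₁ + φ₂) / (2 * (γ : ℂ)) ≠ 0)
    (L M₁ M₂ : ℂ)
    (hL : L = 1 / ((1 - φ₁) * (1 - (φ₁ + φ₂) / (2 * (γ : ℂ)))))
    (hM₁ : M₁ = 1 / (1 - (φ₁ + φ₂) / (2 * (γ : ℂ))))
    (hM₂ : M₂ = 1 / (1 - φ₁)) :
    L * ((1 - 2 * (γ : ℂ)) * φ₂ + φ₂^2 - φ₁ + φ₁^2)
      + (φ₁ - φ₂) * M₁ + 2 * (γ : ℂ) * φ₂ * M₂ = 0 := by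
  have h2γ : 2 * (γ : ℂ) ≠ 0 := mul_ne_zero two_ne_zero (Complex.ofReal_ne_zero.mpr hγ.ne')
  subst hL hM₁ hM₂
  exact one_div_mul_add_mul_one_div_add_mul_one_div_eq_zero h₁ h₂
    (n_system_numerator_eq h2γ φ₁ φ₂)
end
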